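/- Let Γ and Σ be finite connected graphs, Γ bipartite and Σ R-thick (with two distinct vertices z₁, z₂ having the same open neighbourhood). Then the strong product Γ ⊠ Σ admits a nontrivial TF-morphism, hence is unstable. -/

import Mathlib

def IsTF {V : Type*} (G : SimpleGraph V) (α β : Equiv.Perm V) : Prop :=
  ∀ u v : V, G.Adj u v → G.Adj (α u) (β v)

def IsTFS {V : Type*} (G : SimpleGraph V) (α β : Equiv.Perm V) : Prop :=
  (∀ u : V, G.Adj (α u) (β u)) ∧
    ∀ u v : V, G.Adj u v → G.Adj (α u) (β v) ∨ α u = β v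
def strongProd {V W : Type*} (G : SimpleGraph V) (H : SimpleGraph W) :
    SimpleGraph (V × W) where
  Adj p q := (p.1 = q.1 ∧ H.Adj p.2 q.2) ∨ (G.Adj p.1 q.1 ∧ H.Adj p.2 q.2) ∨
    (G.Adj p.1 q.1 ∧ p.2 = q.2)
  symm := by
    constructor
    rintro p q (⟨h1, h2⟩ | ⟨h1, h2⟩ | ⟨h1, h2⟩)
    · exact Or.inl ⟨h1.symm, h2.symm⟩
    · exact Or.inr (Or.inl ⟨h1.symm, h2.symm⟩)
    · exact Or.inr (Or.inr ⟨h1.symm, h2.symm⟩)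
  loopless := by
    constructor
    rintro p (⟨_, h2⟩ | ⟨h1, _⟩ | ⟨h1, _⟩)
    · exact H.irrefl h2
    · exact G.irrefl h1
    · exact G.irrefl h1

def semiStrongProd {V W : Type*} (G : SimpleGraph V) (H : SimpleGraph W) :
    SimpleGraph (V × W) where
  Adj p q := (G.Adj p.1 q.1 ∨ p.1 = q.1) ∧ H.Adj p.2 q.2
  symm := by
    constructor
    rintro p q ⟨h1 | h1, h2⟩
    · exact ⟨Or.inl h1.symm, h2.symm⟩
    · exact ⟨Or.inr h1.symm, h2.symm⟩
  loopless := by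
    constructor
    rintro p ⟨_, h2⟩
    exact H.irrefl h2

def lexProd {V W : Type*} (G : SimpleGraph V) (H : SimpleGraph W) :
    SimpleGraph (V × W) where
  Adj p q := G.Adj p.1 q.1 ∨ (p.1 = q.1 ∧ H.Adj p.2 q.2)
  symm := by
    constructor
    rintro p q (h | ⟨h1, h2⟩)
    · exact Or.inl h.symm
    · exact Or.inr ⟨h1.symm, h2.symm⟩
  loopless := by
    constructor
    rintro p (h | ⟨_, h2⟩)
    · exact G.irrefl h
    · exact H.irrefl h2

def directProd {V W : Type*} (G : SimpleGraph V) (H : SimpleGraph W) :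
    SimpleGraph (V × W) where
  Adj p q := G.Adj p.1 q.1 ∧ H.Adj p.2 q.2
  symm := by
    constructor
    rintro p q ⟨h1, h2⟩
    exact ⟨h1.symm, h2.symm⟩
  loopless := by
    constructor
    rintro p ⟨h1, _⟩
    exact G.irrefl h1

/-!
Colour the bipartite factor `G` with two colours and let `σ` be the transposition of the twins
`z₁, z₂` of `H`. Take `κ` to apply `σ` in the fibres over colour `0` and `τ` to apply it in the
fibres over colour `1`. Since twins have the same neighbourhood, `σ` may be applied to either end
of an edge of `H` independently, which handles the edges of `G ⊠ H` with an `H`-edge component;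
along an edge `a ~ b` of `G` the colours of `a` and `b` differ, so `κ` over `a` and `τ` over `b`
act by the same permutation, which handles the remaining edges.
-/

namespace SimpleGraph

variable {V W : Type*} {G : SimpleGraph V} {H : SimpleGraph W}

theorem neighborSet_swap_apply [DecidableEq W] {z₁ z₂ : W}
    (hN : H.neighborSet z₁ = H.neighborSet z₂) (x : W) :
    H.neighborSet (Equiv.swap z₁ z₂ x) = H.neighborSet x := by
  rw [Equiv.swap_apply_def]
  split_ifs <;> simp_all

theorem Adj.of_neighborSet_apply {f g : Equiv.Perm W}
    (hf : ∀ x, H.neighborSet (f x) = H.neighborSet x)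
    (hg : ∀ x, H.neighborSet (g x) = H.neighborSet x) {x y : W} (h : H.Adj x y) :
    H.Adj (f x) (g y) := by
  have hxy : H.Adj x (g y) := by
    rw [adj_comm, ← mem_neighborSet, hg, mem_neighborSet, adj_comm]
    exact h
  rwa [← mem_neighborSet, hf]

theorem strongProd_isTF_prodShear {f g : V → Equiv.Perm W}
    (hf : ∀ a x, H.neighborSet (f a x) = H.neighborSet x)
    (hg : ∀ a x, H.neighborSet (g a x) = H.neighborSet x)
    (hfg : ∀ a b, G.Adj a b → f a = g b) :
    IsTF (strongProd G H) (Equiv.prodShear (Equiv.refl V) f)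
      (Equiv.prodShear (Equiv.refl V) g) := by
  rintro ⟨a, x⟩ ⟨b, y⟩ (⟨rfl, hxy⟩ | ⟨hab, hxy⟩ | ⟨hab, rfl⟩)
  · exact Or.inl ⟨rfl, hxy.of_neighborSet_apply (hf a) (hg a)⟩
  · exact Or.inr (Or.inl ⟨hab, hxy.of_neighborSet_apply (hf a) (hg b)⟩)
  · exact Or.inr (Or.inr ⟨hab, by simp [hfg a b hab]⟩)

end SimpleGraph

open SimpleGraph

theorem stmt11_general {V W : Type*}
    (G : SimpleGraph V) (H : SimpleGraph W)
    (hGc : G.Connected)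
    (hGbip : G.Colorable 2)
    (hthick : ∃ z₁ z₂ : W, z₁ ≠ z₂ ∧ H.neighborSet z₁ = H.neighborSet z₂) :
    ∃ κ τ : Equiv.Perm (V × W), IsTF (strongProd G H) κ τ ∧ κ ≠ τ := by
  classical
  obtain ⟨z₁, z₂, hz, hN⟩ := hthick
  obtain ⟨C⟩ := hGbip
  obtain ⟨a₀⟩ := hGc.nonempty
  set σ := Equiv.swap z₁ z₂
  have hσ : ∀ x, H.neighborSet (σ x) = H.neighborSet x := neighborSet_swap_apply hN
  let f : V → Equiv.Perm W := fun a => if C a = 0 then σ else 1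
  let g : V → Equiv.Perm W := fun a => if C a = 0 then 1 else σ
  have hf : ∀ a x, H.neighborSet (f a x) = H.neighborSet x := fun a x => by
    by_cases h : C a = 0 <;> simp [f, h, hσ]
  have hg : ∀ a x, H.neighborSet (g a x) = H.neighborSet x := fun a x => by
    by_cases h : C a = 0 <;> simp [g, h, hσ]
  have hfg : ∀ a b, G.Adj a b → f a = g b := fun a b hab => by
    have hC := C.valid hab
    revert hC
    simp only [f, g]
    generalize C a = i, C b = j
    fin_cases i <;> fin_cases j <;> simp
  refine ⟨_, _, strongProd_isTF_prodShear hf hg hfg, fun hκτ => ?_⟩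
  have hκτ₁ : f a₀ z₁ = g a₀ z₁ := congrArg Prod.snd (Equiv.ext_iff.mp hκτ (a₀, z₁))
  by_cases h : C a₀ = 0 <;> simp [f, g, h, σ, hz, hz.symm] at hκτ₁

theorem stmt11 {V W : Type*} [Fintype V] [Fintype W]
    (G : SimpleGraph V) (H : SimpleGraph W)
    (hGc : G.Connected) (hHc : H.Connected)
    (hGbip : G.Colorable 2)
    (hthick : ∃ z₁ z₂ : W, z₁ ≠ z₂ ∧ H.neighborSet z₁ = H.neighborSet z₂) :
    ∃ κ τ : Equiv.Perm (V × W), IsTF (strongProd G H) κ τ ∧ κ ≠ τ :=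
  stmt11_general G H hGc hGbip hthick
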